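/- Let K be a commutative ring and C a K-linear category. Let Kar(C) be the Karoubi (idempotent) completion of C, whose objects are pairs (x, e) with x an object of C and e : x → x an idempotent endomorphism, and whose morphisms (x, e) → (y, e') are morphisms f : x → y in C with f = e' ∘ f ∘ e; Kar(C) inherits a K-linear structure. Then the canonical K-linear embedding G : C → Kar(C), x ↦ (x, id_x), induces an isomorphism HH₀(G) : HH₀(C) → HH₀(Kar(C)) of K-modules. -/

import Mathlib

/-!
For a commutative ring `K` and a `K`-linear category `C`, the zeroth Hochschild homology
(trace) is `HH₀(C) := (⨁ x : C, End x) / span_K { f∘g - g∘f }`. Any `K`-linear functor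
induces a map on `HH₀` sending `[f]` to `[F(f)]`.

STATEMENT: the canonical embedding `G : C ⥤ Kar(C)` of `C` into its Karoubi (idempotent)
completion induces an isomorphism `HH₀(G) : HH₀(C) → HH₀(Kar(C))` of `K`-modules.
(The Karoubi completion, whose objects are pairs `(x, e)` of an object with an idempotent
endomorphism, is `CategoryTheory.Idempotents.Karoubi` in Mathlib; it inherits a `K`-linear
structure, which we record as an instance below.)
-/

open CategoryTheory CategoryTheory.Idempotents
open scoped DirectSum Classical

section KaroubiLinear

variable (K : Type*) [CommRing K] (C : Type*) [Category C] [Preadditive C] [Linear K C]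

noncomputable instance karoubiHomSMul {P Q : Karoubi C} : SMul K (P ⟶ Q) where
  smul r f := ⟨r • f.f, by
    rw [Linear.smul_comp, Linear.comp_smul, f.comm]⟩

noncomputable instance karoubiHomModule {P Q : Karoubi C} : Module K (P ⟶ Q) :=
  Function.Injective.module K (Karoubi.inclusionHom P Q)
    (fun _ _ h => Karoubi.Hom.ext h) (fun _ _ => rfl)

/-- The `K`-linear structure on the Karoubi completion of a `K`-linear category. -/
noncomputable instance karoubiLinear : Linear K (Karoubi C) where
  homModule _ _ := inferInstance
  smul_comp P Q R r f g := by
    apply Karoubi.hom_ext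
    exact Linear.smul_comp _ _ _ r f.f g.f
  comp_smul P Q R f r g := by
    apply Karoubi.hom_ext
    exact Linear.comp_smul _ _ _ f.f r g.f

end KaroubiLinear

/-- The set of commutators `f∘g - g∘f` (for `f : x ⟶ y`, `g : y ⟶ x`) inside `⨁ x : C, End x`. -/
noncomputable def hhCommutators (K : Type*) [CommRing K] (C : Type*) [Category C]
    [Preadditive C] [Linear K C] : Set (⨁ x : C, (x ⟶ x)) :=
  { v | ∃ (x y : C) (f : x ⟶ y) (g : y ⟶ x),
      v = DirectSum.of (fun z : C => z ⟶ z) y (g ≫ f)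
        - DirectSum.of (fun z : C => z ⟶ z) x (f ≫ g) }

/-- The zeroth Hochschild homology (trace) of a `K`-linear category. -/
noncomputable abbrev HH0 (K : Type*) [CommRing K] (C : Type*) [Category C]
    [Preadditive C] [Linear K C] :=
  (⨁ x : C, (x ⟶ x)) ⧸ Submodule.span K (hhCommutators K C)

/-- The class `[f] ∈ HH₀(C)` of an endomorphism `f : x ⟶ x`. -/
noncomputable def HH0.cls (K : Type*) [CommRing K] {C : Type*} [Category C]
    [Preadditive C] [Linear K C] {x : C} (f : x ⟶ x) : HH0 K C :=
  Submodule.Quotient.mk (DirectSum.of (fun z : C => z ⟶ z) x f)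

/-!
An endomorphism `f` of `(x, e)` in `Kar C` factors as `i ≫ (p ≫ f)` through `x`, where
`i ≫ p = 𝟙` exhibits `(x, e)` as a retract of `x`. Cyclic invariance then gives
`[f] = [(p ≫ f) ≫ i] = [f.f]` in `HH₀(Kar C)`, so `[f] ↦ [f.f]` is inverse to
`HH₀(toKaroubi)`.
-/

namespace HH0

variable (K : Type*) [CommRing K] {C : Type*} [Category C] [Preadditive C] [Linear K C]

noncomputable def clsLinearMap (x : C) : (x ⟶ x) →ₗ[K] HH0 K C :=
  (Submodule.mkQ _).comp (DirectSum.lof K C (fun z : C => z ⟶ z) x)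

theorem cls_comp_comm {x y : C} (f : x ⟶ y) (g : y ⟶ x) : cls K (f ≫ g) = cls K (g ≫ f) :=
  ((Submodule.Quotient.eq _).mpr
    (Submodule.subset_span (s := hhCommutators K C) ⟨x, y, f, g, rfl⟩)).symm

variable {K} {M : Type*} [AddCommGroup M] [Module K M]

noncomputable def lift (φ : ∀ x : C, (x ⟶ x) →ₗ[K] M)
    (hφ : ∀ (x y : C) (f : x ⟶ y) (g : y ⟶ x), φ x (f ≫ g) = φ y (g ≫ f)) :
    HH0 K C →ₗ[K] M :=
  Submodule.liftQ _ (DirectSum.toModule K C M φ) <| by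
    rw [Submodule.span_le]
    rintro v ⟨x, y, f, g, rfl⟩
    simp only [SetLike.mem_coe, LinearMap.mem_ker, map_sub, ← DirectSum.lof_eq_of K,
      DirectSum.toModule_lof, hφ, sub_self]

@[simp]
theorem lift_cls (φ : ∀ x : C, (x ⟶ x) →ₗ[K] M)
    (hφ : ∀ (x y : C) (f : x ⟶ y) (g : y ⟶ x), φ x (f ≫ g) = φ y (g ≫ f)) {x : C}
    (f : x ⟶ x) : lift φ hφ (cls K f) = φ x f :=
  DirectSum.toModule_lof (M := fun z : C => z ⟶ z) (φ := φ) K x f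

theorem linearMap_ext {Φ Ψ : HH0 K C →ₗ[K] M}
    (h : ∀ (x : C) (f : x ⟶ x), Φ (cls K f) = Ψ (cls K f)) : Φ = Ψ :=
  Submodule.linearMap_qext _ <| DirectSum.linearMap_ext K fun x => LinearMap.ext (h x)

variable (K) {D : Type*} [Category D] [Preadditive D] [Linear K D]

noncomputable def map (F : C ⥤ D) [F.Additive] [F.Linear K] : HH0 K C →ₗ[K] HH0 K D :=
  lift (fun x => clsLinearMap K (F.obj x) ∘ₗ F.mapLinearMap K) fun x y f g => by
    change cls K (F.map (f ≫ g)) = cls K (F.map (g ≫ f))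
    rw [F.map_comp, F.map_comp, cls_comp_comm]

@[simp]
theorem map_cls (F : C ⥤ D) [F.Additive] [F.Linear K] {x : C} (f : x ⟶ x) :
    map K F (cls K f) = cls K (F.map f) :=
  lift_cls _ _ f

end HH0

section Karoubi

variable (K : Type*) [CommRing K] (C : Type*) [Category C] [Preadditive C] [Linear K C]

instance toKaroubi_linear : (toKaroubi C).Linear K where
  map_smul _ _ := Karoubi.hom_ext _ _ rfl

noncomputable def CategoryTheory.Idempotents.Karoubi.homLinearMap (P Q : Karoubi C) :
    (P ⟶ Q) →ₗ[K] (P.X ⟶ Q.X) :=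
  { Karoubi.inclusionHom P Q with map_smul' := fun _ _ => rfl }

/-- `[f] ↦ [f.f]`; not of the form `HH0.map`, as `f ↦ f.f` does not preserve identities. -/
noncomputable def HH0.karoubiForget : HH0 K (Karoubi C) →ₗ[K] HH0 K C :=
  HH0.lift (fun P => HH0.clsLinearMap K P.X ∘ₗ Karoubi.homLinearMap K C P P) fun _ _ f g =>
    HH0.cls_comp_comm K f.f g.f

@[simp]
theorem HH0.karoubiForget_cls {P : Karoubi C} (f : P ⟶ P) :
    HH0.karoubiForget K C (HH0.cls K f) = HH0.cls K f.f :=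
  HH0.lift_cls _ _ f

variable {C}

@[simp]
theorem HH0.cls_toKaroubi_map_f {P : Karoubi C} (f : P ⟶ P) :
    HH0.cls K ((toKaroubi C).map f.f) = HH0.cls K f := by
  have hfactor : (Karoubi.decompId_p P ≫ f) ≫ Karoubi.decompId_i P = (toKaroubi C).map f.f := by
    ext
    simp
  have hretract : Karoubi.decompId_i P ≫ Karoubi.decompId_p P ≫ f = f := by
    rw [← Category.assoc, ← Karoubi.decompId, Category.id_comp]
  rw [← hfactor, ← HH0.cls_comp_comm, hretract]

end Karoubi

theorem hh0_karoubi_iso (K : Type*) [CommRing K]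
    (C : Type*) [Category C] [Preadditive C] [Linear K C] :
    ∃ φ : HH0 K C →ₗ[K] HH0 K (Karoubi C),
      (∀ (x : C) (f : x ⟶ x), φ (HH0.cls K f) = HH0.cls K ((toKaroubi C).map f)) ∧
        Function.Bijective φ := by
  let e : HH0 K C ≃ₗ[K] HH0 K (Karoubi C) :=
    LinearEquiv.ofLinearMap (HH0.map K (toKaroubi C)) (HH0.karoubiForget K C)
      (HH0.linearMap_ext fun _ _ => by simp)
      (HH0.linearMap_ext fun _ _ => by simp)
  exact ⟨e, fun _ f => HH0.map_cls K (toKaroubi C) f, e.bijective⟩
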